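/- Let α > 0 and β > 0 be real numbers, let k > 0, let p be a positive integer, let q ∈ (0,1), and let λ > 0 and μ > 0 be real numbers. Then for all x, y with 0 < x < y < 1, the following strict double inequality holds: α^λ·k^{(λ/k)βx}·e^{−(λγ/k)βx}·Γ_k(α)^λ / ((α+βx)^λ·[p]_q^{μβx}·Γ_{(p,q)}(α)^μ) < Γ_k(α+βx)^λ / Γ_{(p,q)}(α+βx)^μ < (α+βy)^λ·k^{−(λ/k)β(y−x)}·e^{(λγ/k)β(y−x)}·Γ_k(α+βy)^λ / ((α+βx)^λ·[p]_q^{−μβ(y−x)}·Γ_{(p,q)}(α+βy)^μ). -/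

import Mathlib

open Real

/-- `[p]_q = (1 - q^p)/(1 - q)` -/
noncomputable def pnq (p : ℕ) (q : ℝ) : ℝ := (1 - q ^ p) / (1 - q)

/-- q-psi function via its series representation. -/
noncomputable def psiq (q s : ℝ) : ℝ :=
  -Real.log (1 - q) + Real.log q * ∑' n : ℕ, q ^ (((n : ℝ) + 1) * s) / (1 - q ^ (n + 1))

/-- (p,q)-psi function via its series representation. -/
noncomputable def psipq (p : ℕ) (q s : ℝ) : ℝ :=
  Real.log (pnq p q) +
    Real.log q * ∑ n ∈ Finset.range p, q ^ (((n : ℝ) + 1) * s) / (1 - q ^ (n + 1))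

/-- k-psi function via its series representation. -/
noncomputable def psik (k s : ℝ) : ℝ :=
  (Real.log k - Real.eulerMascheroniConstant) / k - 1 / s +
    ∑' n : ℕ, s / (((n : ℝ) + 1) * k * (((n : ℝ) + 1) * k + s))

/-- (q,k)-psi function via its series representation. -/
noncomputable def psiqk (q k s : ℝ) : ℝ :=
  -Real.log (1 - q) / k +
    Real.log q * ∑' n : ℕ, q ^ (((n : ℝ) + 1) * k * s) / (1 - q ^ (((n : ℝ) + 1) * k))

/-- Normalized q-Gamma function. -/
noncomputable def Gammaq (q s : ℝ) : ℝ :=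
  (1 - q) ^ (-s) *
    Real.exp (∑' n : ℕ, q ^ (((n : ℝ) + 1) * s) / (((n : ℝ) + 1) * (1 - q ^ (n + 1))))

/-- Normalized (p,q)-Gamma function. -/
noncomputable def Gammapq (p : ℕ) (q s : ℝ) : ℝ :=
  (pnq p q) ^ s *
    Real.exp (∑ n ∈ Finset.range p, q ^ (((n : ℝ) + 1) * s) / (((n : ℝ) + 1) * (1 - q ^ (n + 1))))

/-- Normalized (q,k)-Gamma function. -/
noncomputable def Gammaqk (q k s : ℝ) : ℝ :=
  (1 - q) ^ (-s / k) *
    Real.exp (∑' n : ℕ,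
      q ^ (((n : ℝ) + 1) * k * s) / (((n : ℝ) + 1) * k * (1 - q ^ (((n : ℝ) + 1) * k))))

/-- k-Gamma function. -/
noncomputable def Gammak (k s : ℝ) : ℝ :=
  ∫ x in Set.Ioi (0 : ℝ), Real.exp (-(x ^ k) / k) * x ^ (s - 1)

/-!
Taking logarithms, both inequalities say that
`F t = λ (log Γ_k t + log t - t (log k - γ) / k) + μ (t log [p]_q - log Γ_{(p,q)} t)`
satisfies `F a < F (a + b x) < F (a + b y)`, so it suffices that `F` is strictly increasing on
`(0, ∞)`. Since `Γ_k t = k ^ (t / k - 1) Γ (t / k)`, the first bracket equals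
`log Γ (t / k + 1) + γ t / k`, which is monotone because `log Γ` is convex with derivative `-γ`
at `1`. The second bracket is minus the finite sum in the definition of `Γ_{(p,q)}`, whose terms
`q ^ (n t) / (n (1 - q ^ n))` strictly decrease in `t`.
-/

open Set

noncomputable def gammapqSum (p : ℕ) (q t : ℝ) : ℝ :=
  ∑ n ∈ Finset.range p, q ^ (((n : ℝ) + 1) * t) / (((n : ℝ) + 1) * (1 - q ^ (n + 1)))

theorem ConvexOn.le_slope_of_hasDerivAt_of_le {S : Set ℝ} {f : ℝ → ℝ} {f' x u v : ℝ}
    (hfc : ConvexOn ℝ S f) (hx : x ∈ S) (hv : v ∈ S) (hxu : x ≤ u) (huv : u < v)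
    (hf' : HasDerivAt f f' x) : f' ≤ slope f u v := by
  rcases hxu.eq_or_lt with rfl | hxu
  · exact hfc.le_slope_of_hasDerivAt hx hv huv hf'
  have hu : u ∈ S := hfc.1.ordConnected.out hx hv ⟨hxu.le, huv.le⟩
  calc f' ≤ slope f x u := hfc.le_slope_of_hasDerivAt hx hu hxu hf'
    _ ≤ slope f u v := by
      simpa only [slope_def_field] using hfc.slope_mono_adjacent hx hv hxu huv

theorem ConvexOn.monotoneOn_sub_mul_of_hasDerivAt {S : Set ℝ} {f : ℝ → ℝ} {f' x : ℝ}
    (hfc : ConvexOn ℝ S f) (hx : x ∈ S) (hf' : HasDerivAt f f' x) :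
    MonotoneOn (fun t => f t - f' * t) (S ∩ Ici x) := by
  intro u hu v hv huv
  rcases huv.eq_or_lt with rfl | huv
  · rfl
  have hslope := hfc.le_slope_of_hasDerivAt_of_le hx hv.1 hu.2 huv hf'
  rw [slope_def_field, le_div_iff₀ (sub_pos.mpr huv)] at hslope
  dsimp only
  linarith

theorem monotoneOn_log_Gamma_add_mul_eulerMascheroniConstant :
    MonotoneOn (fun t => log (Gamma t) + eulerMascheroniConstant * t) (Ici 1) := by
  have hder : HasDerivAt (log ∘ Gamma) (-eulerMascheroniConstant) 1 := by
    simpa [Gamma_one, Function.comp_def] using hasDerivAt_Gamma_one.log (by simp)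
  have h := convexOn_log_Gamma.monotoneOn_sub_mul_of_hasDerivAt (mem_Ioi.mpr one_pos) hder
  simpa only [Function.comp_apply, neg_mul, sub_neg_eq_add] using
    h.mono (subset_inter (Ici_subset_Ioi.mpr one_pos) subset_rfl)

theorem Gammak_eq {k s : ℝ} (hk : 0 < k) (hs : 0 < s) :
    Gammak k s = k ^ (s / k - 1) * Gamma (s / k) := by
  have hintegrand : Gammak k s = ∫ x in Ioi (0 : ℝ), x ^ (s - 1) * exp (-(1 / k) * x ^ k) := by
    refine MeasureTheory.setIntegral_congr_fun measurableSet_Ioi fun x _ => ?_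
    rw [mul_comm, neg_mul, one_div, inv_mul_eq_div, neg_div]
  rw [hintegrand, integral_rpow_mul_exp_neg_mul_rpow hk (by linarith) (by positivity),
    sub_add_cancel, one_div, inv_rpow hk.le, ← rpow_neg hk.le, ← rpow_neg_one k,
    ← rpow_add hk]
  ring_nf

theorem Gammak_pos {k s : ℝ} (hk : 0 < k) (hs : 0 < s) : 0 < Gammak k s := by
  rw [Gammak_eq hk hs]
  exact mul_pos (rpow_pos_of_pos hk _) (Gamma_pos_of_pos (div_pos hs hk))

theorem log_Gammak_add_log_sub_mul_eq {k s : ℝ} (hk : 0 < k) (hs : 0 < s) :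
    log (Gammak k s) + log s - s * (log k - eulerMascheroniConstant) / k =
      log (Gamma (s / k + 1)) + eulerMascheroniConstant * (s / k) := by
  have hsk : 0 < s / k := div_pos hs hk
  rw [Gammak_eq hk hs, log_mul (rpow_pos_of_pos hk _).ne' (Gamma_pos_of_pos hsk).ne',
    log_rpow hk, Gamma_add_one hsk.ne', log_mul hsk.ne' (Gamma_pos_of_pos hsk).ne',
    log_div hs.ne' hk.ne']
  field_simp
  ring

theorem monotoneOn_log_Gammak_add_log_sub_mul {k : ℝ} (hk : 0 < k) :
    MonotoneOn (fun s => log (Gammak k s) + log s - s * (log k - eulerMascheroniConstant) / k)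
      (Ioi 0) := by
  intro s hs t ht hst
  simp only [log_Gammak_add_log_sub_mul_eq hk hs, log_Gammak_add_log_sub_mul_eq hk ht]
  have h1 : 1 ≤ s / k + 1 := by have := div_pos (mem_Ioi.mp hs) hk; linarith
  have h := monotoneOn_log_Gamma_add_mul_eulerMascheroniConstant h1 (h1.trans (by gcongr))
    (show s / k + 1 ≤ t / k + 1 by gcongr)
  dsimp only at h
  linarith

theorem pnq_pos {p : ℕ} (hp : 0 < p) {q : ℝ} (hq0 : 0 ≤ q) (hq1 : q < 1) : 0 < pnq p q :=
  div_pos (sub_pos.mpr (pow_lt_one₀ hq0 hq1 hp.ne')) (sub_pos.mpr hq1)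

theorem Gammapq_pos {p : ℕ} {q : ℝ} (hpq : 0 < pnq p q) (t : ℝ) : 0 < Gammapq p q t :=
  mul_pos (rpow_pos_of_pos hpq t) (exp_pos _)

theorem log_Gammapq {p : ℕ} {q : ℝ} (hpq : 0 < pnq p q) (t : ℝ) :
    log (Gammapq p q t) = t * log (pnq p q) + gammapqSum p q t := by
  rw [Gammapq, log_mul (rpow_pos_of_pos hpq t).ne' (exp_pos _).ne', log_rpow hpq, log_exp,
    gammapqSum]

theorem gammapqSum_strictAnti {p : ℕ} (hp : 0 < p) {q : ℝ} (hq0 : 0 < q) (hq1 : q < 1) :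
    StrictAnti (gammapqSum p q) := by
  intro s t hst
  refine Finset.sum_lt_sum_of_nonempty (Finset.nonempty_range_iff.mpr hp.ne') fun n _ => ?_
  have hn : (0 : ℝ) < n + 1 := by positivity
  have hqn : q ^ (n + 1) < 1 := pow_lt_one₀ hq0.le hq1 n.succ_ne_zero
  have hden : 0 < ((n : ℝ) + 1) * (1 - q ^ (n + 1)) := mul_pos hn (sub_pos.mpr hqn)
  gcongr
  exact rpow_lt_rpow_of_exponent_gt hq0 hq1 (mul_lt_mul_of_pos_left hst hn)

theorem strictMono_mul_log_pnq_sub_log_Gammapq {p : ℕ} (hp : 0 < p) {q : ℝ} (hq0 : 0 < q)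
    (hq1 : q < 1) : StrictMono (fun t => t * log (pnq p q) - log (Gammapq p q t)) := by
  intro s t hst
  simp only [log_Gammapq (pnq_pos hp hq0.le hq1), sub_add_cancel_left, neg_lt_neg_iff]
  exact gammapqSum_strictAnti hp hq0 hq1 hst

theorem strictMonoOn_normalized_log_Gammak_pow_div_Gammapq_pow {k : ℝ} (hk : 0 < k) {p : ℕ}
    (hp : 0 < p) {q : ℝ} (hq0 : 0 < q) (hq1 : q < 1) {lam mu : ℝ} (hlam : 0 ≤ lam)
    (hmu : 0 < mu) :
    StrictMonoOn
      (fun t => lam * (log (Gammak k t) + log t - t * (log k - eulerMascheroniConstant) / k) +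
        mu * (t * log (pnq p q) - log (Gammapq p q t))) (Ioi 0) :=
  ((monotone_mul_left_of_nonneg hlam).comp_monotoneOn
    (monotoneOn_log_Gammak_add_log_sub_mul hk)).add_strictMono
    (((strictMono_mul_log_pnq_sub_log_Gammapq hp hq0 hq1).const_mul hmu).strictMonoOn _)

theorem stmt14_general (a b : ℝ) (ha : 0 < a) (hb : 0 < b)
    (k : ℝ) (hk : 0 < k) (p : ℕ) (hp : 0 < p) (q : ℝ) (hq : q ∈ Set.Ioo (0 : ℝ) 1)
    (lam mu : ℝ) (hlam : 0 < lam) (hmu : 0 < mu)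
    (x y : ℝ) (hx : 0 < x) (hxy : x < y) :
    a ^ lam * k ^ (lam / k * b * x) *
        Real.exp (-(lam * Real.eulerMascheroniConstant / k * b * x)) * (Gammak k a) ^ lam /
        ((a + b * x) ^ lam * (pnq p q) ^ (mu * b * x) * (Gammapq p q a) ^ mu) <
      (Gammak k (a + b * x)) ^ lam / (Gammapq p q (a + b * x)) ^ mu ∧
    (Gammak k (a + b * x)) ^ lam / (Gammapq p q (a + b * x)) ^ mu <
      (a + b * y) ^ lam * k ^ (-(lam / k * b * (y - x))) *
        Real.exp (lam * Real.eulerMascheroniConstant / k * b * (y - x)) *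
        (Gammak k (a + b * y)) ^ lam /
        ((a + b * x) ^ lam * (pnq p q) ^ (-(mu * b * (y - x))) *
          (Gammapq p q (a + b * y)) ^ mu) := by
  obtain ⟨hq0, hq1⟩ := hq
  have hpq := pnq_pos hp hq0.le hq1
  have hs : 0 < a + b * x := by positivity
  have hu : 0 < a + b * y := by linarith [mul_lt_mul_of_pos_left hxy hb]
  have hF := strictMonoOn_normalized_log_Gammak_pow_div_Gammapq_pow hk hp hq0 hq1 hlam.le hmu
  have h1 := hF ha hs (lt_add_of_pos_right a (mul_pos hb hx))
  have h2 := hF hs hu (by gcongr)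
  simp only [rpow_def_of_pos, ha, hk, hs, hu, hpq, Gammak_pos hk, Gammapq_pos hpq, ← exp_add,
    ← exp_sub, exp_lt_exp]
  constructor
  · linear_combination h1
  · linear_combination h2

theorem stmt14 (a b : ℝ) (ha : 0 < a) (hb : 0 < b)
    (k : ℝ) (hk : 0 < k) (p : ℕ) (hp : 0 < p) (q : ℝ) (hq : q ∈ Set.Ioo (0 : ℝ) 1)
    (lam mu : ℝ) (hlam : 0 < lam) (hmu : 0 < mu)
    (x y : ℝ) (hx : 0 < x) (hxy : x < y) (hy : y < 1) :
    a ^ lam * k ^ (lam / k * b * x) *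
        Real.exp (-(lam * Real.eulerMascheroniConstant / k * b * x)) * (Gammak k a) ^ lam /
        ((a + b * x) ^ lam * (pnq p q) ^ (mu * b * x) * (Gammapq p q a) ^ mu) <
      (Gammak k (a + b * x)) ^ lam / (Gammapq p q (a + b * x)) ^ mu ∧
    (Gammak k (a + b * x)) ^ lam / (Gammapq p q (a + b * x)) ^ mu <
      (a + b * y) ^ lam * k ^ (-(lam / k * b * (y - x))) *
        Real.exp (lam * Real.eulerMascheroniConstant / k * b * (y - x)) *
        (Gammak k (a + b * y)) ^ lam /
        ((a + b * x) ^ lam * (pnq p q) ^ (-(mu * b * (y - x))) *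
          (Gammapq p q (a + b * y)) ^ mu) :=
  stmt14_general a b ha hb k hk p hp q hq lam mu hlam hmu x y hx hxy
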